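/- Let Σ be a finite complete simplicial fan in N, σ ∈ Σ with dim σ ≥ 2, and x a primitive element of N in the relative interior of σ. If P* is a primitive collection of the star subdivision Σ*_{(σ,x)} and x ∈ P*, then G(σ) ∩ P* = ∅. -/

import Mathlib

noncomputable section

open Finset

/-- The real vector space `N_ℝ` for the lattice `N = ℤ^d`. -/
abbrev NR (d : ℕ) := Fin d → ℝ

/-- The canonical map from the lattice `N = ℤ^d` to `N_ℝ`. -/
def toNR {d : ℕ} (x : Fin d → ℤ) : NR d := fun i => (x i : ℝ)

/-- The convex cone generated by a set: all finite nonnegative real combinations. -/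
def coneOf {d : ℕ} (S : Set (NR d)) : Set (NR d) :=
  { y | ∃ (n : ℕ) (c : Fin n → ℝ) (v : Fin n → NR d),
      (∀ i, 0 ≤ c i) ∧ (∀ i, v i ∈ S) ∧ y = ∑ i, c i • v i }

/-- `τ` is a face of the cone `σ`, cut out by a linear functional nonnegative on `σ`. -/
def IsFaceOf {d : ℕ} (τ σ : Set (NR d)) : Prop :=
  ∃ u : NR d →ₗ[ℝ] ℝ, (∀ x ∈ σ, 0 ≤ u x) ∧ τ = {x ∈ σ | u x = 0}

/-- A rational polyhedral cone: generated by finitely many lattice points. -/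
def IsRationalPolyhedralCone {d : ℕ} (σ : Set (NR d)) : Prop :=
  ∃ S : Finset (Fin d → ℤ), σ = coneOf (toNR '' (↑S : Set (Fin d → ℤ)))

/-- A pointed (strongly convex) cone. -/
def IsPointedCone {d : ℕ} (σ : Set (NR d)) : Prop :=
  ∀ x ∈ σ, -x ∈ σ → x = 0

/-- A primitive lattice vector. -/
def IsPrimitive {d : ℕ} (x : Fin d → ℤ) : Prop :=
  x ≠ 0 ∧ ∀ (k : ℤ) (y : Fin d → ℤ), x = k • y → k = 1 ∨ k = -1

/-- The dimension of a cone. -/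
def coneDim {d : ℕ} (σ : Set (NR d)) : ℕ :=
  Module.finrank ℝ ↥(Submodule.span ℝ σ)

/-- A (finite) fan in `N = ℤ^d`: a finite collection of rational pointed polyhedral
cones, closed under taking faces, such that the intersection of any two cones is a
face of each. -/
structure Fan (d : ℕ) where
  cones : Set (Set (NR d))
  finite : cones.Finite
  rational : ∀ σ ∈ cones, IsRationalPolyhedralCone σ
  pointed : ∀ σ ∈ cones, IsPointedCone σ
  face_mem : ∀ σ ∈ cones, ∀ τ : Set (NR d), IsFaceOf τ σ → τ ∈ cones
  inter_face : ∀ σ ∈ cones, ∀ τ ∈ cones, IsFaceOf (σ ∩ τ) σ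

namespace Fan

variable {d : ℕ}

/-- A complete fan. -/
def IsComplete (F : Fan d) : Prop := ⋃₀ F.cones = Set.univ

/-- A simplicial fan: every cone is generated by linearly independent vectors. -/
def IsSimplicial (F : Fan d) : Prop :=
  ∀ σ ∈ F.cones, ∃ S : Finset (Fin d → ℤ),
    LinearIndependent ℝ (fun v : ↥(toNR '' (↑S : Set (Fin d → ℤ))) => (v : NR d)) ∧
    σ = coneOf (toNR '' (↑S : Set (Fin d → ℤ)))

/-- A nonsingular fan: every cone is generated by part of a `ℤ`-basis of `N`. -/
def IsNonsingular (F : Fan d) : Prop :=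
  ∀ σ ∈ F.cones, ∃ (b : Module.Basis (Fin d) ℤ (Fin d → ℤ)) (t : Set (Fin d)),
    σ = coneOf (toNR '' (⇑b '' t))

/-- `G(Σ)`: the set of primitive generators of the rays of a fan. -/
def genSet (F : Fan d) : Set (Fin d → ℤ) :=
  { x | IsPrimitive x ∧ coneOf {toNR x} ∈ F.cones }

/-- `G(σ) = σ ∩ G(Σ)`. -/
def coneGens (F : Fan d) (σ : Set (NR d)) : Set (Fin d → ℤ) :=
  { x ∈ F.genSet | toNR x ∈ σ }

/-- A primitive collection of a fan. -/
def IsPrimitiveCollection (F : Fan d) (P : Finset (Fin d → ℤ)) : Prop :=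
  P.Nonempty ∧ (↑P : Set (Fin d → ℤ)) ⊆ F.genSet ∧
    coneOf (toNR '' (↑P : Set (Fin d → ℤ))) ∉ F.cones ∧
    ∀ x ∈ P, coneOf (toNR '' ((↑P : Set (Fin d → ℤ)) \ {x})) ∈ F.cones

/-- `IsPrimRel F P Y a`: `P` is a primitive collection of `F` whose primitive relation is
`∑_{x ∈ P} x = ∑_{y ∈ Y} (a y) • y`, where `Y = G(σ(P))` and `σ(P)` is the unique cone
whose relative interior contains `∑_{x ∈ P} x`, and the coefficients `a y` are positive. -/
def IsPrimRel (F : Fan d) (P Y : Finset (Fin d → ℤ)) (a : (Fin d → ℤ) → ℤ) : Prop :=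
  F.IsPrimitiveCollection P ∧
  ∃ σ ∈ F.cones, (↑Y : Set (Fin d → ℤ)) = F.coneGens σ ∧
    toNR (∑ x ∈ P, x) ∈ intrinsicInterior ℝ σ ∧
    (∀ y ∈ Y, 0 < a y) ∧ (∑ x ∈ P, x) = ∑ y ∈ Y, a y • y

/-- A Fano fan: a finite complete nonsingular fan with `deg P > 0` for every
primitive collection `P` (so its toric variety is a nonsingular toric Fano `d`-fold). -/
def IsFanoFan (F : Fan d) : Prop :=
  F.IsComplete ∧ F.IsNonsingular ∧
    ∀ P Y a, F.IsPrimRel P Y a → ∑ y ∈ Y, a y < (P.card : ℤ)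

/-- The collection of cones of the star subdivision of `F` along `(σ, x)`. -/
def starSub (F : Fan d) (σ : Set (NR d)) (x : Fin d → ℤ) : Set (Set (NR d)) :=
  { τ ∈ F.cones | ¬ IsFaceOf σ τ } ∪
  { ρ | ∃ τ ∈ F.cones, IsFaceOf σ τ ∧ ∃ xi ∈ F.coneGens σ,
      IsFaceOf ρ (coneOf (toNR ''
        (insert x ((F.coneGens τ \ F.coneGens σ) ∪ (F.coneGens σ \ {xi}))))) }

/-- `F'` is the star subdivision of `F` along `(σ, x)`. -/
def IsStarSubdivisionOf (F' F : Fan d) (σ : Set (NR d)) (x : Fin d → ℤ) : Prop :=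
  F'.cones = F.starSub σ x

/-- `F'` is an equivariant blow-up of `F`: the star subdivision along a cone `σ` (with at
least two generators) and the sum of the elements of `G(σ)`. -/
def IsBlowupOf (F' F : Fan d) : Prop :=
  ∃ σ ∈ F.cones, ∃ S : Finset (Fin d → ℤ),
    (↑S : Set (Fin d → ℤ)) = F.coneGens σ ∧ 2 ≤ S.card ∧
    F'.IsStarSubdivisionOf F σ (∑ y ∈ S, y)

/-- One step of F-equivalence: an equivariant blow-up or blow-down between Fano fans. -/
def FStep (F G : Fan d) : Prop :=
  F.IsFanoFan ∧ G.IsFanoFan ∧ (G.IsBlowupOf F ∨ F.IsBlowupOf G)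

/-- F-equivalence of Fano fans. -/
def FEquiv : Fan d → Fan d → Prop := Relation.ReflTransGen FStep

/-- A splitting fan: any two distinct primitive collections are disjoint. -/
def IsSplittingFan (F : Fan d) : Prop :=
  F.IsComplete ∧ F.IsNonsingular ∧
    ∀ P Q, F.IsPrimitiveCollection P → F.IsPrimitiveCollection Q → P ≠ Q →
      ∀ x ∈ P, x ∉ Q

/-- Data of a wall relation: `τ` is a wall (a `(d-1)`-dimensional cone) with
`G(τ) = Z`, `z_d = zd`, `z_{d+1} = zd1` the generators of the two maximal cones
containing `τ`, and `∑_{z ∈ Z} (b z) • z + zd + zd1 = 0`.  The anticanonical degree of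
the corresponding invariant curve is `∑_{z ∈ Z} b z + 2`. -/
def IsWallRel (F : Fan d) (τ : Set (NR d)) (Z : Finset (Fin d → ℤ))
    (zd zd1 : Fin d → ℤ) (b : (Fin d → ℤ) → ℤ) : Prop :=
  τ ∈ F.cones ∧ coneDim τ = d - 1 ∧ (↑Z : Set (Fin d → ℤ)) = F.coneGens τ ∧
    zd ∈ F.genSet ∧ zd1 ∈ F.genSet ∧ zd ≠ zd1 ∧ zd ∉ Z ∧ zd1 ∉ Z ∧
    coneOf (toNR '' (insert zd (↑Z : Set (Fin d → ℤ)))) ∈ F.cones ∧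
    coneOf (toNR '' (insert zd1 (↑Z : Set (Fin d → ℤ)))) ∈ F.cones ∧
    (∑ z ∈ Z, b z • z) + zd + zd1 = 0

end Fan

/-- The fan of a product of projective spaces `P^{a 0} × ⋯ × P^{a (r-1)}`. -/
def IsProdProjFan {d r : ℕ} (F : Fan d) (a : Fin r → ℕ) : Prop :=
  ∃ e : (j : Fin r) → Fin (a j + 1) → (Fin d → ℤ),
    (∀ j, ∑ i, e j i = 0) ∧
    (∃ b : Module.Basis ((j : Fin r) × Fin (a j)) ℤ (Fin d → ℤ),
       ∀ (j : Fin r) (i : Fin (a j)), e j i.castSucc = b ⟨j, i⟩) ∧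
    F.cones = { σ | ∃ s : (j : Fin r) → Finset (Fin (a j + 1)),
        (∀ j, s j ≠ Finset.univ) ∧
        σ = coneOf (toNR '' (⋃ j, (e j) '' (↑(s j) : Set (Fin (a j + 1))))) }

/-- The fan of the projective space `P^d`. -/
def IsProjFan {d : ℕ} (F : Fan d) : Prop := IsProdProjFan F (fun _ : Fin 1 => d)

/-- The lattice points of `N_ℝ`. -/
def latticePts (d : ℕ) : Set (NR d) := Set.range (toNR (d := d))

/-- `F` is, up to a unimodular identification, the product of the fans `F₁` and `F₂`. -/
def IsProductOf {d d₁ d₂ : ℕ} (F : Fan d) (F₁ : Fan d₁) (F₂ : Fan d₂) : Prop :=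
  ∃ φ : NR d ≃ₗ[ℝ] NR d₁ × NR d₂,
    (⇑φ '' latticePts d = (latticePts d₁) ×ˢ (latticePts d₂)) ∧
    F.cones = { σ | ∃ σ₁ ∈ F₁.cones, ∃ σ₂ ∈ F₂.cones, ⇑φ '' σ = σ₁ ×ˢ σ₂ }

/-- `δ` is a nonempty proper face of the polytope `Δ`. -/
def IsProperPolytopeFace {d : ℕ} (δ Δ : Set (NR d)) : Prop :=
  δ.Nonempty ∧ δ ≠ Δ ∧ ∃ (u : NR d →ₗ[ℝ] ℝ) (c : ℝ),
    (∀ x ∈ Δ, u x ≤ c) ∧ δ = {x ∈ Δ | u x = c}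

/-- The collection of cones over the proper faces of the polytope `Conv(V)`
(together with the zero cone). -/
def polytopeFaceFan {d : ℕ} (V : Set (NR d)) : Set (Set (NR d)) :=
  insert ({0} : Set (NR d))
    { σ | ∃ δ : Set (NR d), IsProperPolytopeFace δ (convexHull ℝ V) ∧ σ = coneOf δ }

/-- The four-dimensional del Pezzo fan `V⁴` (up to unimodular equivalence). -/
def IsDelPezzoFan4 (F : Fan 4) : Prop :=
  ∃ b : Module.Basis (Fin 4) ℤ (Fin 4 → ℤ),
    F.cones = polytopeFaceFan (toNR ''
      ((Set.range ⇑b) ∪ (Set.range fun i => -b i) ∪ {(∑ i, b i), -(∑ i, b i)}))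

/-- The four-dimensional pseudo del Pezzo fan `Ṽ⁴` (up to unimodular equivalence). -/
def IsPseudoDelPezzoFan4 (F : Fan 4) : Prop :=
  ∃ b : Module.Basis (Fin 4) ℤ (Fin 4 → ℤ),
    F.cones = polytopeFaceFan (toNR ''
      ((Set.range ⇑b) ∪ (Set.range fun i => -b i) ∪ {∑ i, b i}))

/-- An equivariant blow-up of a 3-dimensional fan at an invariant point: star subdivision
along a 3-dimensional cone and the sum of its three generators. -/
def PointBlowup3 (F' F : Fan 3) : Prop :=
  ∃ σ ∈ F.cones, ∃ S : Finset (Fin 3 → ℤ),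
    (↑S : Set (Fin 3 → ℤ)) = F.coneGens σ ∧ S.card = 3 ∧
    F'.IsStarSubdivisionOf F σ (∑ y ∈ S, y)

/-- An equivariant blow-up of a 3-dimensional fan along an invariant curve: star
subdivision along a 2-dimensional cone and the sum of its two generators. -/
def CurveBlowup3 (F' F : Fan 3) : Prop :=
  ∃ σ ∈ F.cones, ∃ S : Finset (Fin 3 → ℤ),
    (↑S : Set (Fin 3 → ℤ)) = F.coneGens σ ∧ S.card = 2 ∧
    F'.IsStarSubdivisionOf F σ (∑ y ∈ S, y)

/-!
Suppose `y ∈ G(σ) ∩ P*`. As `x` is interior to `σ` and `dim σ ≥ 2`, `x ∉ G(σ)`, so `P* \ {y}`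
spans a cone of `Σ*` containing `x`. An old cone containing `x` would contain `σ` as a face, so
this is a face of a new cone `σ_i + τ'`, i.e. `P* \ {y} ⊆ G(σ_i + τ')`. No cone of `Σ*` contains
all of `G(σ)` (old cones would have `σ` as a face, new ones miss some `x_i`), so applying this to
`P* \ {x}` gives some `x_k ∈ G(σ) \ P*`. Exchanging `x_i` for `x_k` gives `P* ⊆ G(σ_k + τ')`,
and since `σ_k + τ'` is simplicial, `Cone(P*)` is one of its faces, hence a cone of `Σ*`:
a contradiction with `P*` being primitive.
-/

section Lattice

variable {d : ℕ}

lemma toNR_injective : Function.Injective (toNR (d := d)) :=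
  fun _ _ h => funext fun i => Int.cast_injective (congrFun h i)

@[simp]
lemma toNR_eq_zero {a : Fin d → ℤ} : toNR a = 0 ↔ a = 0 :=
  toNR_injective.eq_iff' (by ext; simp [toNR])

lemma toNR_zsmul (k : ℤ) (a : Fin d → ℤ) : toNR (k • a) = (k : ℝ) • toNR a := by
  ext i; simp [toNR]

def latticeContent (a : Fin d → ℤ) : ℤ := Finset.univ.gcd a

def primitivePart (a : Fin d → ℤ) : Fin d → ℤ := fun i => a i / latticeContent a

lemma latticeContent_nonneg (a : Fin d → ℤ) : 0 ≤ latticeContent a :=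
  Int.nonneg_of_normalize_eq_self Finset.normalize_gcd

lemma latticeContent_eq_zero {a : Fin d → ℤ} : latticeContent a = 0 ↔ a = 0 := by
  simp [latticeContent, Finset.gcd_eq_zero_iff, funext_iff]

lemma latticeContent_pos {a : Fin d → ℤ} (ha : a ≠ 0) : 0 < latticeContent a :=
  (latticeContent_nonneg a).lt_of_ne' (mt latticeContent_eq_zero.1 ha)

lemma latticeContent_smul_primitivePart (a : Fin d → ℤ) :
    latticeContent a • primitivePart a = a :=
  funext fun i => Int.mul_ediv_cancel' (Finset.gcd_dvd (Finset.mem_univ i))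

lemma toNR_primitivePart (a : Fin d → ℤ) :
    toNR (primitivePart a) = (latticeContent a : ℝ)⁻¹ • toNR a := by
  rcases eq_or_ne a 0 with rfl | h
  · ext i; simp [toNR, primitivePart]
  · have ha := congrArg toNR (latticeContent_smul_primitivePart a)
    rw [toNR_zsmul] at ha
    rw [← ha, smul_smul, inv_mul_cancel₀ (mod_cast (latticeContent_pos h).ne'), one_smul]

lemma isPrimitive_primitivePart {a : Fin d → ℤ} (ha : a ≠ 0) :
    IsPrimitive (primitivePart a) := by
  have hc : latticeContent a ≠ 0 := mt latticeContent_eq_zero.1 ha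
  refine ⟨fun h => ha (by rw [← latticeContent_smul_primitivePart a, h, smul_zero]), ?_⟩
  intro k y hky
  have hdvd : latticeContent a * k ∣ latticeContent a := by
    refine Finset.dvd_gcd fun i _ => ⟨y i, ?_⟩
    have hai := congrFun (latticeContent_smul_primitivePart a) i
    rw [hky] at hai
    simp only [Pi.smul_apply, smul_eq_mul] at hai
    rw [← hai]; ring
  obtain ⟨e, he⟩ := hdvd
  exact Int.eq_one_or_neg_one_of_mul_eq_one (mul_left_cancel₀ hc (by linear_combination -he) :
    k * e = 1)

lemma IsPrimitive.latticeContent_eq_one {a : Fin d → ℤ} (ha : IsPrimitive a) :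
    latticeContent a = 1 := by
  rcases ha.2 _ _ (latticeContent_smul_primitivePart a).symm with h | h
  · exact h
  · linarith [latticeContent_nonneg a]

/-- By Bézout (`∑ i, b i * c i = 1`), the ratio `t = ∑ i, a i * c i` is an integer. -/
lemma IsPrimitive.eq_of_toNR_eq_smul {a b : Fin d → ℤ} (ha : IsPrimitive a)
    (hb : IsPrimitive b) {t : ℝ} (ht : 0 < t) (h : toNR a = t • toNR b) : a = b := by
  obtain ⟨c, hc⟩ := Finset.gcd_eq_sum_mul Finset.univ b
  set k : ℤ := ∑ i, a i * c i
  have htk : t = k := by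
    have hbc : ∑ i, (b i : ℝ) * c i = 1 := by
      have := hb.latticeContent_eq_one
      rw [latticeContent, hc] at this
      exact_mod_cast this
    have hab : ∀ i, (a i : ℝ) = t * b i := fun i => congrFun h i
    calc t = t * ∑ i, (b i : ℝ) * c i := by rw [hbc, mul_one]
      _ = k := by simp only [k, Int.cast_sum, Int.cast_mul, hab, Finset.mul_sum, mul_assoc]
  have hab : a = k • b := toNR_injective (by rw [toNR_zsmul, ← htk, h])
  rcases ha.2 k b hab with hk | hk
  · rw [hab, hk, one_smul]
  · rw [htk, hk] at ht; norm_num at ht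

end Lattice

section IntrinsicInterior

open Filter Topology

variable {E : Type*} [NormedAddCommGroup E] [NormedSpace ℝ E]

lemma exists_neg_lineMap_mem_of_mem_intrinsicInterior {s : Set E} {p w : E}
    (hp : p ∈ intrinsicInterior ℝ s) (hw : w ∈ s) :
    ∃ t : ℝ, t < 0 ∧ AffineMap.lineMap p w t ∈ s := by
  obtain ⟨q, hq, rfl⟩ := hp
  let f : ℝ → affineSpan ℝ s := fun t =>
    ⟨AffineMap.lineMap (q : E) w t, AffineMap.lineMap_mem _ q.2 (subset_affineSpan ℝ s hw)⟩
  have hf : Continuous f :=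
    (by fun_prop : Continuous fun t : ℝ => AffineMap.lineMap (q : E) w t).subtype_mk _
  have hnear : ∀ᶠ t in 𝓝 (0 : ℝ), f t ∈ interior (Subtype.val ⁻¹' s) :=
    hf.continuousAt.eventually_mem (by simpa [f] using isOpen_interior.mem_nhds hq)
  obtain ⟨t, hts, ht⟩ := ((hnear.filter_mono nhdsWithin_le_nhds).and
    (self_mem_nhdsWithin : Set.Iio (0 : ℝ) ∈ 𝓝[<] 0)).exists
  exact ⟨t, ht, interior_subset (s := Subtype.val ⁻¹' s) hts⟩

/-- Otherwise `u` would be negative at a point of `s` slightly beyond `p` on the line from `w`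
through `p`. -/
lemma eq_zero_of_mem_intrinsicInterior {s : Set E} {u : E →ₗ[ℝ] ℝ} (hu : ∀ w ∈ s, 0 ≤ u w)
    {p : E} (hp : p ∈ intrinsicInterior ℝ s) (hup : u p = 0) {w : E} (hw : w ∈ s) :
    u w = 0 := by
  obtain ⟨t, ht, hts⟩ := exists_neg_lineMap_mem_of_mem_intrinsicInterior hp hw
  have := hu _ hts
  rw [AffineMap.lineMap_apply_module, map_add, map_smul, map_smul, hup, smul_eq_mul,
    smul_eq_mul, mul_zero, zero_add] at this
  exact le_antisymm (nonpos_of_mul_nonneg_right this ht) (hu w hw)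

end IntrinsicInterior

section Cones

variable {d : ℕ}

lemma coneOf_eq_hull (T : Set (NR d)) : coneOf T = PointedCone.hull ℝ T := by
  ext y
  rw [SetLike.mem_coe, PointedCone.hull, Submodule.mem_span_set']
  constructor
  · rintro ⟨n, c, v, hc, hv, rfl⟩
    exact ⟨n, fun i => ⟨c i, hc i⟩, fun i => ⟨v i, hv i⟩, by simp [Nonneg.mk_smul]⟩
  · rintro ⟨n, c, v, rfl⟩
    exact ⟨n, fun i => c i, fun i => v i, fun i => (c i).2, fun i => (v i).2,
      by simp [Nonneg.coe_smul]⟩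

lemma subset_coneOf (T : Set (NR d)) : T ⊆ coneOf T := by
  rw [coneOf_eq_hull]; exact PointedCone.subset_hull

lemma coneOf_mono {T T' : Set (NR d)} (h : T ⊆ T') : coneOf T ⊆ coneOf T' := by
  simp only [coneOf_eq_hull]; exact Submodule.span_mono h

lemma smul_mem_coneOf {T : Set (NR d)} {w : NR d} (hw : w ∈ coneOf T) {t : ℝ} (ht : 0 ≤ t) :
    t • w ∈ coneOf T := by
  rw [coneOf_eq_hull] at hw ⊢; exact Submodule.smul_mem _ ⟨t, ht⟩ hw

lemma coneOf_subset_coneOf {T T' : Set (NR d)} (h : T ⊆ coneOf T') : coneOf T ⊆ coneOf T' := by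
  simp only [coneOf_eq_hull] at h ⊢; exact Submodule.span_le.2 h

lemma mem_coneOf_singleton {v w : NR d} : w ∈ coneOf {v} ↔ ∃ t : ℝ, 0 ≤ t ∧ t • v = w := by
  rw [coneOf_eq_hull, SetLike.mem_coe, PointedCone.hull, Submodule.mem_span_singleton]
  exact ⟨fun ⟨t, ht⟩ => ⟨t, t.2, ht⟩, fun ⟨t, ht, htv⟩ => ⟨⟨t, ht⟩, htv⟩⟩

lemma nonneg_of_mem_coneOf {T : Set (NR d)} {u : NR d →ₗ[ℝ] ℝ} (hu : ∀ v ∈ T, 0 ≤ u v)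
    {w : NR d} (hw : w ∈ coneOf T) : 0 ≤ u w := by
  rw [coneOf_eq_hull] at hw
  induction hw using Submodule.span_induction with
  | mem v hv => exact hu v hv
  | zero => simp
  | add _ _ _ _ h₁ h₂ => rw [map_add]; exact add_nonneg h₁ h₂
  | smul t _ _ h => rw [← Nonneg.coe_smul, map_smul]; exact mul_nonneg t.2 h

lemma mem_coneOf_sep_of_eq_zero {T : Set (NR d)} {u : NR d →ₗ[ℝ] ℝ} (hu : ∀ v ∈ T, 0 ≤ u v)
    {w : NR d} (hw : w ∈ coneOf T) (huw : u w = 0) : w ∈ coneOf {v ∈ T | u v = 0} := by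
  rw [coneOf_eq_hull] at hw ⊢
  suffices 0 ≤ u w ∧ (u w = 0 → w ∈ PointedCone.hull ℝ {v ∈ T | u v = 0}) from this.2 huw
  clear huw
  induction hw using Submodule.span_induction with
  | mem v hv => exact ⟨hu v hv, fun h => PointedCone.subset_hull ⟨hv, h⟩⟩
  | zero => exact ⟨by simp, fun _ => zero_mem _⟩
  | add w₁ w₂ _ _ h₁ h₂ =>
    refine ⟨by rw [map_add]; exact add_nonneg h₁.1 h₂.1, fun h => ?_⟩
    rw [map_add] at h
    exact add_mem (h₁.2 (by linarith [h₁.1, h₂.1])) (h₂.2 (by linarith [h₁.1, h₂.1]))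
  | smul t w _ h =>
    rw [← Nonneg.coe_smul, map_smul, smul_eq_mul]
    refine ⟨mul_nonneg t.2 h.1, fun h' => ?_⟩
    rw [Nonneg.coe_smul]
    rcases mul_eq_zero.1 h' with ht | hw
    · rw [show t = 0 from Subtype.ext ht, zero_smul]; exact zero_mem _
    · exact Submodule.smul_mem _ t (h.2 hw)

lemma IsFaceOf.subset {τ σ : Set (NR d)} (h : IsFaceOf τ σ) : τ ⊆ σ := by
  obtain ⟨u, -, rfl⟩ := h
  exact Set.sep_subset _ _

lemma IsFaceOf.refl (σ : Set (NR d)) : IsFaceOf σ σ :=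
  ⟨0, fun _ _ => le_rfl, by simp⟩

lemma exists_linearMap_eq_zero_eq_one {A B : Set (NR d)} (hBA : B ⊆ A)
    (hA : LinearIndepOn ℝ id A) :
    ∃ u : NR d →ₗ[ℝ] ℝ, (∀ v ∈ B, u v = 0) ∧ (∀ v ∈ A, v ∉ B → u v = 1) ∧
      ∀ v ∈ A, 0 ≤ u v := by
  classical
  let b := Module.Basis.extend hA
  let u : NR d →ₗ[ℝ] ℝ := b.constr ℝ fun i => if (i : NR d) ∈ B then 0 else 1
  have hu : ∀ v ∈ A, u v = if v ∈ B then 0 else 1 := fun v hv => by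
    have hvb : b ⟨v, hA.subset_extend _ hv⟩ = v := Module.Basis.extend_apply_self hA _
    rw [← hvb, Module.Basis.constr_basis]
    simp [hvb]
  refine ⟨u, fun v hv => by simp [hu v (hBA hv), hv], fun v hv hvB => by simp [hu v hv, hvB],
    fun v hv => ?_⟩
  rw [hu v hv]
  split_ifs <;> norm_num

lemma isFaceOf_coneOf_of_subset {A B : Set (NR d)} (hBA : B ⊆ A)
    (hA : LinearIndepOn ℝ id A) : IsFaceOf (coneOf B) (coneOf A) := by
  obtain ⟨u, huB, huA, hu⟩ := exists_linearMap_eq_zero_eq_one hBA hA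
  refine ⟨u, fun w => nonneg_of_mem_coneOf hu, Set.Subset.antisymm ?_ ?_⟩
  · intro w hw
    refine ⟨coneOf_mono hBA hw, le_antisymm ?_ (nonneg_of_mem_coneOf hu (coneOf_mono hBA hw))⟩
    simpa using nonneg_of_mem_coneOf (u := -u) (fun v hv => by simp [huB v hv]) hw
  · rintro w ⟨hw, huw⟩
    refine coneOf_mono (fun v hv => ?_) (mem_coneOf_sep_of_eq_zero hu hw huw)
    by_contra h
    simpa [huA v hv.1 h] using hv.2

lemma exists_pos_smul_mem_of_isFaceOf_coneOf_singleton {A : Set (NR d)} {z : NR d}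
    (hz : z ≠ 0) (h : IsFaceOf (coneOf {z}) (coneOf A)) :
    ∃ a ∈ A, ∃ t : ℝ, 0 < t ∧ a = t • z := by
  obtain ⟨u, hu, heq⟩ := h
  have hzA : z ∈ coneOf {z} := subset_coneOf _ rfl
  rw [heq] at hzA
  have hz₀ := mem_coneOf_sep_of_eq_zero (fun v hv => hu v (subset_coneOf _ hv)) hzA.1 hzA.2
  obtain ⟨a, ⟨haA, hua⟩, ha⟩ : ∃ a ∈ {v ∈ A | u v = 0}, a ≠ 0 := by
    by_contra! h
    rw [coneOf_eq_hull, show PointedCone.hull ℝ _ = ⊥ from Submodule.span_eq_bot.2 h] at hz₀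
    exact hz hz₀
  have : a ∈ coneOf {z} := heq ▸ ⟨subset_coneOf _ haA, hua⟩
  obtain ⟨t, ht, rfl⟩ := mem_coneOf_singleton.1 this
  exact ⟨_, haA, t, ht.lt_of_ne (by rintro rfl; simp at ha), rfl⟩

lemma coneOf_singleton_smul (v : NR d) {t : ℝ} (ht : 0 < t) :
    coneOf {t • v} = coneOf {v} := by
  simp only [coneOf_eq_hull]
  exact congrArg SetLike.coe (Submodule.span_singleton_smul_eq
    (r := (⟨t, ht.le⟩ : {r : ℝ // 0 ≤ r})) (isUnit_iff_ne_zero.2 (by simp [ht.ne'])) v)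

lemma IsFaceOf.eq_of_mem_intrinsicInterior {τ σ : Set (NR d)} (h : IsFaceOf τ σ)
    {p : NR d} (hpτ : p ∈ τ) (hpσ : p ∈ intrinsicInterior ℝ σ) : τ = σ := by
  obtain ⟨u, hu, rfl⟩ := h
  exact Set.Subset.antisymm (Set.sep_subset _ _)
    fun w hw => ⟨hw, eq_zero_of_mem_intrinsicInterior hu hpσ hpτ.2 hw⟩

lemma mem_of_isFaceOf_coneOf_singleton {A : Set (Fin d → ℤ)}
    (hA : ∀ a ∈ A, IsPrimitive a) {z : Fin d → ℤ} (hz : IsPrimitive z)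
    (h : IsFaceOf (coneOf {toNR z}) (coneOf (toNR '' A))) : z ∈ A := by
  obtain ⟨_, ⟨a, ha, rfl⟩, t, ht, hat⟩ :=
    exists_pos_smul_mem_of_isFaceOf_coneOf_singleton (by simpa using hz.1) h
  rwa [← (hA a ha).eq_of_toNR_eq_smul hz ht hat]

end Cones

namespace Fan

variable {d : ℕ} (F : Fan d)

lemma smul_mem {ρ : Set (NR d)} (hρ : ρ ∈ F.cones) {w : NR d} (hw : w ∈ ρ) {t : ℝ}
    (ht : 0 ≤ t) : t • w ∈ ρ := by
  obtain ⟨S, rfl⟩ := F.rational ρ hρ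
  exact smul_mem_coneOf hw ht

lemma isFaceOf_coneOf_singleton {ρ : Set (NR d)} (hρ : ρ ∈ F.cones) {v : NR d}
    (hv : coneOf {v} ∈ F.cones) (hvρ : v ∈ ρ) : IsFaceOf (coneOf {v}) ρ := by
  have hsub : coneOf {v} ⊆ ρ := fun w hw => by
    obtain ⟨t, ht, rfl⟩ := mem_coneOf_singleton.1 hw
    exact F.smul_mem hρ hvρ ht
  simpa [Set.inter_eq_right.2 hsub] using F.inter_face ρ hρ _ hv

lemma coneOf_singleton_notMem {σ : Set (NR d)} (hσ : σ ∈ F.cones) (hdim : 2 ≤ coneDim σ)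
    {v : NR d} (hv : v ∈ intrinsicInterior ℝ σ) : coneOf {v} ∉ F.cones := by
  intro hray
  have hσv : coneOf {v} = σ := (F.isFaceOf_coneOf_singleton hσ hray
    (intrinsicInterior_subset hv)).eq_of_mem_intrinsicInterior (subset_coneOf _ rfl) hv
  have : coneDim σ ≤ 1 := by
    rw [coneDim, ← hσv]
    calc Module.finrank ℝ (Submodule.span ℝ (coneOf {v}))
        ≤ Module.finrank ℝ (Submodule.span ℝ {v}) := by
          refine Submodule.finrank_mono (Submodule.span_le.2 fun w hw => ?_)
          obtain ⟨t, -, rfl⟩ := mem_coneOf_singleton.1 hw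
          exact Submodule.smul_mem _ t (Submodule.subset_span rfl)
      _ ≤ 1 := by simpa using finrank_span_le_card (R := ℝ) ({v} : Set (NR d))
  omega

lemma primitivePart_mem_coneGens {ρ : Set (NR d)} (hρ : ρ ∈ F.cones) {S : Set (Fin d → ℤ)}
    (hS : LinearIndepOn ℝ id (toNR '' S)) (hρS : ρ = coneOf (toNR '' S)) {s : Fin d → ℤ}
    (hs : s ∈ S) : primitivePart s ∈ F.coneGens ρ := by
  have hs0 : s ≠ 0 := by simpa using hS.ne_zero ⟨s, hs, rfl⟩
  have hc : 0 < (latticeContent s : ℝ) := mod_cast latticeContent_pos hs0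
  have hray : coneOf {toNR (primitivePart s)} = coneOf (toNR '' {s}) := by
    rw [toNR_primitivePart, coneOf_singleton_smul _ (inv_pos.2 hc), Set.image_singleton]
  have hface : IsFaceOf (coneOf (toNR '' {s})) ρ :=
    hρS ▸ isFaceOf_coneOf_of_subset (Set.image_mono (Set.singleton_subset_iff.2 hs)) hS
  refine ⟨⟨isPrimitive_primitivePart hs0, hray ▸ F.face_mem ρ hρ _ hface⟩, ?_⟩
  rw [toNR_primitivePart, hρS]
  exact smul_mem_coneOf (subset_coneOf (toNR '' S) ⟨s, hs, rfl⟩) (inv_nonneg.2 hc.le)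

lemma coneGens_eq_image_primitivePart {ρ : Set (NR d)} (hρ : ρ ∈ F.cones)
    {S : Set (Fin d → ℤ)} (hS : LinearIndepOn ℝ id (toNR '' S))
    (hρS : ρ = coneOf (toNR '' S)) : F.coneGens ρ = primitivePart '' S := by
  refine Set.Subset.antisymm ?_
    (Set.image_subset_iff.2 fun s hs => F.primitivePart_mem_coneGens hρ hS hρS hs)
  rintro g ⟨⟨hg, hgray⟩, hgρ⟩
  have hface := F.isFaceOf_coneOf_singleton hρ hgray hgρ
  rw [hρS] at hface
  obtain ⟨_, ⟨s, hs, rfl⟩, t, ht, hst⟩ :=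
    exists_pos_smul_mem_of_isFaceOf_coneOf_singleton (by simpa using hg.1) hface
  have hc : 0 < (latticeContent s : ℝ) :=
    mod_cast latticeContent_pos (by simpa using hS.ne_zero ⟨s, hs, rfl⟩)
  refine ⟨s, hs, IsPrimitive.eq_of_toNR_eq_smul
    (F.primitivePart_mem_coneGens hρ hS hρS hs).1.1 hg (t := (latticeContent s : ℝ)⁻¹ * t)
    (by positivity) ?_⟩
  rw [toNR_primitivePart, hst, smul_smul]

section Simplicial

variable {F}

lemma IsSimplicial.linearIndepOn_coneGens (hs : F.IsSimplicial) {ρ : Set (NR d)}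
    (hρ : ρ ∈ F.cones) : LinearIndepOn ℝ id (toNR '' F.coneGens ρ) := by
  obtain ⟨S, hS, hρS⟩ := hs ρ hρ
  replace hS : LinearIndepOn ℝ id (toNR '' (S : Set (Fin d → ℤ))) := hS
  rw [F.coneGens_eq_image_primitivePart hρ hS hρS, Set.image_image]
  refine LinearIndepOn.id_image ?_
  have hS' : LinearIndependent ℝ fun s : S => toNR (s : Fin d → ℤ) :=
    (linearIndepOn_iff_image toNR_injective.injOn).2 hS
  have hc : ∀ s : S, (latticeContent (s : Fin d → ℤ) : ℝ) ≠ 0 := fun s =>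
    mod_cast (latticeContent_pos (by simpa using hS.ne_zero ⟨(s : Fin d → ℤ), s.2, rfl⟩)).ne'
  show LinearIndependent ℝ fun s : S => toNR (primitivePart (s : Fin d → ℤ))
  convert hS'.units_smul fun s => (Units.mk0 _ (hc s))⁻¹ using 1
  ext s : 1
  simp [toNR_primitivePart, Units.smul_def]

lemma IsSimplicial.eq_coneOf_coneGens (hs : F.IsSimplicial) {ρ : Set (NR d)}
    (hρ : ρ ∈ F.cones) : ρ = coneOf (toNR '' F.coneGens ρ) := by
  obtain ⟨S, hS, hρS⟩ := hs ρ hρ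
  rw [F.coneGens_eq_image_primitivePart hρ hS hρS, hρS]
  refine Set.Subset.antisymm (coneOf_subset_coneOf ?_) (coneOf_subset_coneOf ?_)
  · rintro _ ⟨s, hs, rfl⟩
    rw [← latticeContent_smul_primitivePart s, toNR_zsmul]
    exact smul_mem_coneOf (subset_coneOf (toNR '' (primitivePart '' S)) ⟨_, ⟨s, hs, rfl⟩, rfl⟩)
      (Int.cast_nonneg (latticeContent_nonneg s))
  · rintro _ ⟨_, ⟨s, hs, rfl⟩, rfl⟩
    rw [toNR_primitivePart]
    exact smul_mem_coneOf (subset_coneOf (toNR '' S) ⟨s, hs, rfl⟩)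
      (inv_nonneg.2 (Int.cast_nonneg (latticeContent_nonneg s)))

end Simplicial

variable {σ τ : Set (NR d)} {x xi : Fin d → ℤ}

/-- `G(σ_i + τ')` in the notation of the star subdivision, for `τ = σ + τ'` and `xi = x_i`. -/
def starGens (σ τ : Set (NR d)) (x xi : Fin d → ℤ) : Set (Fin d → ℤ) :=
  insert x ((F.coneGens τ \ F.coneGens σ) ∪ (F.coneGens σ \ {xi}))

lemma isPrimitive_of_mem_starGens (hx : IsPrimitive x) {a : Fin d → ℤ}
    (ha : a ∈ F.starGens σ τ x xi) : IsPrimitive a := by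
  rcases ha with rfl | ⟨h, -⟩ | ⟨h, -⟩
  exacts [hx, h.1.1, h.1.1]

lemma mem_of_isFaceOf_coneOf_starGens {F' : Fan d} (hsub : F'.IsStarSubdivisionOf F σ x)
    (hτ : τ ∈ F.cones) (hστ : IsFaceOf σ τ) (hxi : xi ∈ F.coneGens σ) {ρ : Set (NR d)}
    (hρ : IsFaceOf ρ (coneOf (toNR '' F.starGens σ τ x xi))) : ρ ∈ F'.cones := by
  rw [hsub]
  exact Or.inr ⟨τ, hτ, hστ, xi, hxi, hρ⟩

lemma subset_starGens_of_isFaceOf {F' : Fan d} (hsub : F'.IsStarSubdivisionOf F σ x)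
    (hx : IsPrimitive x) (hτ : τ ∈ F.cones) (hστ : IsFaceOf σ τ) (hxi : xi ∈ F.coneGens σ)
    {S : Set (Fin d → ℤ)} (hS : S ⊆ F'.genSet)
    (hface : IsFaceOf (coneOf (toNR '' S)) (coneOf (toNR '' F.starGens σ τ x xi))) :
    S ⊆ F.starGens σ τ x xi := fun s hs =>
  mem_of_isFaceOf_coneOf_singleton (fun _ => F.isPrimitive_of_mem_starGens hx) (hS hs).1
    (F'.isFaceOf_coneOf_singleton
      (F.mem_of_isFaceOf_coneOf_starGens hsub hτ hστ hxi (IsFaceOf.refl _)) (hS hs).2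
      (hface.subset (subset_coneOf _ ⟨s, hs, rfl⟩)))

/-- `x` is not in the span of `G(τ) \ {xi}`: a functional vanishing there and positive on `xi`
is nonnegative on `σ`, so it cannot vanish at the relative interior point `x`. -/
lemma linearIndepOn_starGens (hs : F.IsSimplicial) (hxσ : toNR x ∈ intrinsicInterior ℝ σ)
    (hτ : τ ∈ F.cones) (hστ : IsFaceOf σ τ) (hxi : xi ∈ F.coneGens σ) :
    LinearIndepOn ℝ id (toNR '' F.starGens σ τ x xi) := by
  have hGστ : F.coneGens σ ⊆ F.coneGens τ := fun g hg => ⟨hg.1, hστ.subset hg.2⟩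
  have hliτ := hs.linearIndepOn_coneGens hτ
  have hxspan : toNR x ∉ Submodule.span ℝ (toNR '' (F.coneGens τ \ {xi})) := by
    intro hxspan
    obtain ⟨u, huB, huA, hu⟩ :=
      exists_linearMap_eq_zero_eq_one (Set.image_mono Set.sdiff_subset) hliτ
    have hux : u (toNR x) = 0 :=
      (Submodule.span_le (p := LinearMap.ker u)).2 (fun v hv => huB v hv) hxspan
    have huσ : ∀ w ∈ σ, 0 ≤ u w := fun w hw =>
      nonneg_of_mem_coneOf hu (hs.eq_coneOf_coneGens hτ ▸ hστ.subset hw)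
    have huxi := eq_zero_of_mem_intrinsicInterior huσ hxσ hux hxi.2
    rw [huA _ ⟨xi, hGστ hxi, rfl⟩
      (by rintro ⟨g, hg, hgxi⟩; exact hg.2 (toNR_injective hgxi))] at huxi
    exact one_ne_zero huxi
  refine ((hliτ.mono (Set.image_mono Set.sdiff_subset)).id_insert hxspan).mono ?_
  rw [starGens, Set.image_insert_eq]
  refine Set.insert_subset_insert (Set.image_mono ?_)
  rintro g (⟨hg, hgσ⟩ | ⟨hg, hgxi⟩)
  · exact ⟨hg, by rintro rfl; exact hgσ hxi⟩
  · exact ⟨hGστ hg, hgxi⟩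

lemma coneOf_mem_of_subset_starGens {F' : Fan d} (hsub : F'.IsStarSubdivisionOf F σ x)
    (hs : F.IsSimplicial) (hxσ : toNR x ∈ intrinsicInterior ℝ σ) (hτ : τ ∈ F.cones)
    (hστ : IsFaceOf σ τ) (hxi : xi ∈ F.coneGens σ) {S : Set (Fin d → ℤ)}
    (hS : S ⊆ F.starGens σ τ x xi) : coneOf (toNR '' S) ∈ F'.cones :=
  F.mem_of_isFaceOf_coneOf_starGens hsub hτ hστ hxi
    (isFaceOf_coneOf_of_subset (Set.image_mono hS) (F.linearIndepOn_starGens hs hxσ hτ hστ hxi))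

/-- An old cone containing the relative interior point `x` of `σ` would contain `σ` as a face. -/
lemma exists_subset_starGens {F' : Fan d} (hsub : F'.IsStarSubdivisionOf F σ x)
    (hσ : σ ∈ F.cones) (hx : IsPrimitive x) (hxσ : toNR x ∈ intrinsicInterior ℝ σ)
    {S : Set (Fin d → ℤ)} (hS : S ⊆ F'.genSet) (hxS : x ∈ S)
    (hSF' : coneOf (toNR '' S) ∈ F'.cones) :
    ∃ τ ∈ F.cones, IsFaceOf σ τ ∧ ∃ xi ∈ F.coneGens σ, S ⊆ F.starGens σ τ x xi := by
  rw [hsub] at hSF'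
  rcases hSF' with ⟨hρ, hnot⟩ | ⟨τ, hτ, hστ, xi, hxi, hface⟩
  · have hxρ : toNR x ∈ coneOf (toNR '' S) := subset_coneOf _ ⟨x, hxS, rfl⟩
    have hσρ : σ ∩ coneOf (toNR '' S) = σ := (F.inter_face σ hσ _ hρ).eq_of_mem_intrinsicInterior
      ⟨intrinsicInterior_subset hxσ, hxρ⟩ hxσ
    exact absurd (by simpa [Set.inter_comm, hσρ] using F.inter_face _ hρ σ hσ) hnot
  · exact ⟨τ, hτ, hστ, xi, hxi, F.subset_starGens_of_isFaceOf hsub hx hτ hστ hxi hS hface⟩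

lemma not_coneGens_subset {F' : Fan d} (hsub : F'.IsStarSubdivisionOf F σ x)
    (hs : F.IsSimplicial) (hσ : σ ∈ F.cones) (hx : IsPrimitive x) (hxG : x ∉ F.coneGens σ)
    {S : Set (Fin d → ℤ)} (hS : S ⊆ F'.genSet) (hSF' : coneOf (toNR '' S) ∈ F'.cones) :
    ¬ F.coneGens σ ⊆ S := by
  intro hGS
  rw [hsub] at hSF'
  rcases hSF' with ⟨hρ, hnot⟩ | ⟨τ, hτ, hστ, xi, hxi, hface⟩
  · have hσρ : σ ⊆ coneOf (toNR '' S) := by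
      rw [hs.eq_coneOf_coneGens hσ]
      exact coneOf_mono (Set.image_mono hGS)
    exact hnot (by simpa [Set.inter_eq_right.2 hσρ] using F.inter_face _ hρ σ hσ)
  · rcases F.subset_starGens_of_isFaceOf hsub hx hτ hστ hxi hS hface (hGS hxi) with
      h | ⟨-, h⟩ | ⟨-, h⟩
    exacts [hxG (h ▸ hxi), h hxi, h rfl]

lemma subset_starGens_of_diff_subset {S : Set (Fin d → ℤ)} {y xk : Fin d → ℤ}
    (h : S \ {y} ⊆ F.starGens σ τ x xi) (hy : y ∈ F.coneGens σ) (hxkS : xk ∉ S) :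
    S ⊆ F.starGens σ τ x xk := by
  intro v hv
  have hvxk : v ∉ ({xk} : Set _) := by rintro rfl; exact hxkS hv
  by_cases hvy : v = y
  · subst hvy
    exact Or.inr (Or.inr ⟨hy, hvxk⟩)
  · rcases h ⟨hv, hvy⟩ with h | h | ⟨h, -⟩
    exacts [Or.inl h, Or.inr (Or.inl h), Or.inr (Or.inr ⟨h, hvxk⟩)]

end Fan

theorem primitiveCollection_of_starSubdivision_disjoint_general {d : ℕ} (F F' : Fan d)
    (hs : F.IsSimplicial)
    (σ : Set (NR d)) (hσ : σ ∈ F.cones) (hdim : 2 ≤ coneDim σ)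
    (x : Fin d → ℤ) (hx : IsPrimitive x) (hxσ : toNR x ∈ intrinsicInterior ℝ σ)
    (Gσ : Finset (Fin d → ℤ)) (hGσ : (↑Gσ : Set (Fin d → ℤ)) = F.coneGens σ)
    (hsub : F'.IsStarSubdivisionOf F σ x) :
    ∀ Pstar : Finset (Fin d → ℤ), F'.IsPrimitiveCollection Pstar → x ∈ Pstar →
      ∀ y ∈ Gσ, y ∉ Pstar := by
  intro Pstar hP hxP y hyG hyP
  have hxG : x ∉ F.coneGens σ := fun h => F.coneOf_singleton_notMem hσ hdim hxσ h.1.2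
  have hy : y ∈ F.coneGens σ := hGσ ▸ hyG
  obtain ⟨τ, hτ, hστ, xi, hxi, hPy⟩ := F.exists_subset_starGens hsub hσ hx hxσ
    (Set.sdiff_subset.trans hP.2.1) ⟨hxP, by rintro rfl; exact hxG hy⟩ (hP.2.2.2 y hyP)
  obtain ⟨xk, hxk, hxkP⟩ : ∃ xk ∈ F.coneGens σ, xk ∉ Pstar := by
    by_contra! hGP
    exact F.not_coneGens_subset hsub hs hσ hx hxG (Set.sdiff_subset.trans hP.2.1)
      (hP.2.2.2 x hxP) fun g hg => ⟨hGP g hg, by rintro rfl; exact hxG hg⟩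
  exact hP.2.2.1 (F.coneOf_mem_of_subset_starGens hsub hs hxσ hτ hστ hxk
    (F.subset_starGens_of_diff_subset hPy hy hxkP))

/-- A primitive collection of the star subdivision containing `x` is
disjoint from `G(σ)`. -/
theorem primitiveCollection_of_starSubdivision_disjoint {d : ℕ} (F F' : Fan d)
    (hc : F.IsComplete) (hs : F.IsSimplicial)
    (σ : Set (NR d)) (hσ : σ ∈ F.cones) (hdim : 2 ≤ coneDim σ)
    (x : Fin d → ℤ) (hx : IsPrimitive x) (hxσ : toNR x ∈ intrinsicInterior ℝ σ)
    (Gσ : Finset (Fin d → ℤ)) (hGσ : (↑Gσ : Set (Fin d → ℤ)) = F.coneGens σ)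
    (hsub : F'.IsStarSubdivisionOf F σ x) :
    ∀ Pstar : Finset (Fin d → ℤ), F'.IsPrimitiveCollection Pstar → x ∈ Pstar →
      ∀ y ∈ Gσ, y ∉ Pstar :=
  primitiveCollection_of_starSubdivision_disjoint_general F F' hs σ hσ hdim x hx hxσ Gσ hGσ hsub
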